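/- For a composition κ = (γ_1, …, γ_k) of n chosen uniformly at random among all 2^{n−1} compositions of n, let A_n be the event that the last part has a size not appearing among the earlier parts, i.e. γ_k ≠ γ_j for all j = 1, …, k−1. Then P(A_n) → 0 as n → ∞; indeed there is a constant C > 0 such that P(A_n) ≤ C √(n log n)/n for all n ≥ 2. -/

import Mathlib

/-!
Write `y_m = 1 - 2^{-(m+2)}`. Cutting off the last part `m`, a composition of `n` with a new
last part is a composition of `n - m` avoiding the part `m`, followed by `m`. The number `a(N)` of
compositions of `N` avoiding `m` satisfies the renewal inequality `a(N) ≤ ∑_{1 ≤ j ≤ N, j ≠ m} a(N - j)`,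
and `y_m` is chosen so that `∑_{j ≥ 1, j ≠ m} (2 y_m)^{-j} ≤ 1`; hence `a(N) ≤ 2 (2 y_m)^N`, and
`P(A_n) ≤ 4 ∑_m 2^{-m} y_m^{n-m}`. Splitting at `M = log₄ n`, the parts `m ≤ M` contribute
`O(2^M / n)` since `y_M^{n-M} ≤ 2^{M+2}/(n-M)`, and the parts `m > M` contribute `O(2^{-M})`.
So `P(A_n) = O(n^{-1/2})`.
-/

open Filter

/-- The event `A_n`: the last part of the composition has a size not appearing
among the earlier parts (vacuously true for a single-part composition). -/
def lastPartNew {n : ℕ} (c : Composition n) : Prop :=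
  ∀ x ∈ c.blocks.dropLast, ∀ h : c.blocks ≠ [], x ≠ c.blocks.getLast h

/-- `P(A_n)`: the probability of `A_n` under the uniform measure on the
`2^(n-1)` compositions of `n`. -/
noncomputable def probLastPartNew (n : ℕ) : ℝ :=
  (Nat.card {c : Composition n // lastPartNew c} : ℝ) / 2 ^ (n - 1)

open Finset

theorem geom_sum_Ioc_le_of_lt_one {K : Type*} [Field K] [LinearOrder K] [IsStrictOrderedRing K]
    {x : K} (hx₀ : 0 ≤ x) (hx₁ : x < 1) (a b : ℕ) :
    ∑ i ∈ Ioc a b, x ^ i ≤ x ^ (a + 1) / (1 - x) := by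
  have : Ioc a b = Ico (a + 1) (b + 1) := by ext; simp only [mem_Ioc, mem_Ico]; omega
  rw [this]
  exact geom_sum_Ico_le_of_lt_one hx₀ hx₁

theorem one_sub_pow_mul_le_one {K : Type*} [CommRing K] [LinearOrder K] [IsStrictOrderedRing K]
    {s : K} (hs₀ : 0 ≤ s) (hs₁ : s ≤ 1) (k : ℕ) :
    (1 - s) ^ k * (k * s) ≤ 1 := by
  have hks : k * s ≤ (1 + s) ^ k := by
    linarith [one_add_mul_le_pow (show -2 ≤ s by linarith) k]
  calc (1 - s) ^ k * (k * s) ≤ (1 - s) ^ k * (1 + s) ^ k := by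
        gcongr
    _ = (1 - s ^ 2) ^ k := by rw [← mul_pow]; ring
    _ ≤ 1 := pow_le_one₀ (by nlinarith) (by nlinarith)

def compositionsAvoiding (m N : ℕ) : Finset (List ℕ) :=
  {l ∈ univ.image (Composition.blocks (n := N)) | m ∉ l}

theorem mem_compositionsAvoiding {m N : ℕ} {l : List ℕ} :
    l ∈ compositionsAvoiding m N ↔ (∀ x ∈ l, 0 < x) ∧ l.sum = N ∧ m ∉ l := by
  simp only [compositionsAvoiding, mem_filter, mem_image, mem_univ, true_and]
  constructor
  · rintro ⟨⟨c, rfl⟩, hm⟩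
    exact ⟨fun _ => c.blocks_pos, c.blocks_sum, hm⟩
  · rintro ⟨hpos, hsum, hm⟩
    exact ⟨⟨⟨l, hpos _, hsum⟩, rfl⟩, hm⟩

theorem card_compositionsAvoiding_le_two_pow (m N : ℕ) :
    #(compositionsAvoiding m N) ≤ 2 ^ (N - 1) :=
  (card_filter_le _ _).trans <| card_image_le.trans <| by rw [card_univ, composition_card]

theorem card_compositionsAvoiding_succ_le (m N : ℕ) :
    #(compositionsAvoiding m (N + 1)) ≤
      ∑ j ∈ (Icc 1 (N + 1)).erase m, #(compositionsAvoiding m (N + 1 - j)) := by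
  calc #(compositionsAvoiding m (N + 1))
      ≤ #(((Icc 1 (N + 1)).erase m).biUnion fun j =>
          (compositionsAvoiding m (N + 1 - j)).image (j :: ·)) := by
        refine card_le_card fun l hl => ?_
        obtain ⟨hpos, hsum, hm⟩ := mem_compositionsAvoiding.1 hl
        obtain _ | ⟨j, t⟩ := l
        · simp at hsum
        have hj := hpos j List.mem_cons_self
        simp only [List.sum_cons, List.mem_cons, not_or] at hsum hm
        simp only [mem_biUnion, mem_erase, mem_Icc, mem_image, List.cons.injEq]
        refine ⟨j, ⟨Ne.symm hm.1, hj, by omega⟩, t, ?_, rfl, rfl⟩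
        exact mem_compositionsAvoiding.2
          ⟨fun x hx => hpos x (List.mem_cons_of_mem _ hx), by omega, hm.2⟩
    _ ≤ ∑ j ∈ (Icc 1 (N + 1)).erase m, #((compositionsAvoiding m (N + 1 - j)).image (j :: ·)) :=
        card_biUnion_le
    _ ≤ _ := sum_le_sum fun _ _ => card_image_le

theorem card_lastPartNew_le {n : ℕ} (hn : 1 ≤ n) :
    Nat.card {c : Composition n // lastPartNew c} ≤
      ∑ m ∈ Icc 1 n, #(compositionsAvoiding m (n - m)) := by
  let T := (Icc 1 n).biUnion fun m => (compositionsAvoiding m (n - m)).image (· ++ [m])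
  have hT (c : Composition n) (hc : lastPartNew c) : c.blocks ∈ T := by
    have hne : c.blocks ≠ [] := by rw [Ne, c.blocks_eq_nil]; omega
    have hsum : c.blocks.dropLast.sum + c.blocks.getLast hne = n := by
      conv_rhs => rw [← c.blocks_sum, ← List.dropLast_append_getLast hne]
      simp
    have hlast := c.blocks_pos (List.getLast_mem hne)
    simp only [T, mem_biUnion, mem_Icc, mem_image]
    refine ⟨_, ⟨hlast, by omega⟩, _, ?_, List.dropLast_append_getLast hne⟩
    exact mem_compositionsAvoiding.2 ⟨fun x hx => c.blocks_pos (List.dropLast_subset _ hx),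
      by omega, fun h => hc _ h hne rfl⟩
  calc Nat.card {c : Composition n // lastPartNew c} ≤ Nat.card T :=
        Nat.card_le_card_of_injective (fun c => ⟨c.1.blocks, hT c.1 c.2⟩)
          fun c d h => Subtype.ext (Composition.ext (congrArg Subtype.val h))
    _ = #T := Nat.card_eq_finsetCard T
    _ ≤ ∑ m ∈ Icc 1 n, #((compositionsAvoiding m (n - m)).image (· ++ [m])) := card_biUnion_le
    _ ≤ _ := sum_le_sum fun _ _ => card_image_le

noncomputable def avoidRate (m : ℕ) : ℝ := 1 - (1 / 2) ^ (m + 2)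

theorem avoidRate_pos (m : ℕ) : 0 < avoidRate m := by
  have : (1 / 2 : ℝ) ^ (m + 2) < 1 := pow_lt_one₀ (by norm_num) (by norm_num) (by omega)
  unfold avoidRate; linarith

theorem avoidRate_le_one (m : ℕ) : avoidRate m ≤ 1 := by
  unfold avoidRate; linarith [pow_pos (one_half_pos (α := ℝ)) (m + 2)]

theorem avoidRate_mono : Monotone avoidRate := fun m m' h => by
  unfold avoidRate
  linarith [pow_le_pow_of_le_one (one_half_pos (α := ℝ)).le one_half_lt_one.le
    (Nat.add_le_add_right h 2)]

theorem half_le_avoidRate_pow (m : ℕ) : 1 / 2 ≤ avoidRate m ^ m := by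
  have hm : (m : ℝ) ≤ 2 ^ m := by exact_mod_cast Nat.lt_two_pow_self.le
  have hcancel : (2 : ℝ) ^ m * (1 / 2) ^ m = 1 := by rw [← mul_pow]; norm_num
  have hbern := one_add_mul_le_pow (a := -(1 / 2 : ℝ) ^ (m + 2))
    (by linarith [pow_le_one₀ (n := m + 2) (one_half_pos (α := ℝ)).le one_half_lt_one.le]) m
  rw [← sub_eq_add_neg, pow_add] at hbern
  unfold avoidRate
  rw [pow_add]
  nlinarith [pow_pos (one_half_pos (α := ℝ)) m]

theorem avoidRate_pow_le (M k : ℕ) (hk : 0 < k) :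
    avoidRate M ^ k ≤ 2 ^ (M + 2) / k := by
  have h := one_sub_pow_mul_le_one (s := (1 / 2 : ℝ) ^ (M + 2)) (by positivity)
    (pow_le_one₀ (by norm_num) (by norm_num)) k
  have hk' : (0 : ℝ) < k := by exact_mod_cast hk
  rw [le_div_iff₀ hk']
  calc avoidRate M ^ k * k = avoidRate M ^ k * (k * (1 / 2) ^ (M + 2)) * 2 ^ (M + 2) := by
        rw [mul_assoc, mul_assoc, ← mul_pow]; norm_num
    _ ≤ 2 ^ (M + 2) := by unfold avoidRate; nlinarith [pow_pos (two_pos (α := ℝ)) (M + 2)]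

/-- With `u = 2^{-(m+1)}`, the full series is `1 / (1 - u) ≤ 1 + 2u`, and the omitted term
`(2 - u)^{-m} ≥ 2^{-m} = 2u` pays for the excess. -/
theorem sum_inv_two_mul_avoidRate_pow_le_one {m N : ℕ} (hm : m ∈ Icc 1 N) :
    ∑ j ∈ (Icc 1 N).erase m, (2 * avoidRate m)⁻¹ ^ j ≤ 1 := by
  set u : ℝ := (1 / 2) ^ (m + 1)
  have hu₀ : 0 < u := by positivity
  have hu : u ≤ 1 / 4 := by
    have := pow_le_pow_of_le_one (one_half_pos (α := ℝ)).le one_half_lt_one.le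
      (show 2 ≤ m + 1 by linarith [(mem_Icc.1 hm).1])
    norm_num at this ⊢; linarith
  have hρ : 2 * avoidRate m = 2 - u := by unfold avoidRate u; ring
  set r := (2 * avoidRate m)⁻¹
  have hr : r * (2 - u) = 1 := by rw [← hρ]; exact inv_mul_cancel₀ (by rw [hρ]; linarith)
  have hr₀ : 0 ≤ r := inv_nonneg.2 (by rw [hρ]; linarith)
  have hr₁ : r < 1 := by nlinarith
  have hgeom : ∑ j ∈ Icc 1 N, r ^ j ≤ r / (1 - r) := by
    have := geom_sum_Ioc_le_of_lt_one hr₀ hr₁ 0 N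
    rwa [zero_add, pow_one] at this
  have hrm : 2 * u ≤ r ^ m := by
    calc 2 * u = (1 / 2) ^ m := by unfold u; rw [pow_succ]; ring
      _ ≤ r ^ m := pow_le_pow_left₀ (by norm_num) (by nlinarith) m
  have hfrac : r / (1 - r) ≤ 1 + 2 * u := by
    rw [div_le_iff₀ (by linarith)]
    nlinarith
  rw [sum_erase_eq_sub hm]
  linarith

theorem card_compositionsAvoiding_le {m : ℕ} (hm : 1 ≤ m) (N : ℕ) :
    (#(compositionsAvoiding m N) : ℝ) ≤ 2 * (2 * avoidRate m) ^ N := by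
  set ρ := 2 * avoidRate m
  have hρ : 0 < ρ := by linarith [avoidRate_pos m]
  induction N using Nat.strong_induction_on with
  | _ N ih =>
  rcases le_or_gt N m with hNm | hmN
  · have hrate : 1 / 2 ≤ avoidRate m ^ N := (half_le_avoidRate_pow m).trans
      (pow_le_pow_of_le_one (avoidRate_pos m).le (avoidRate_le_one m) hNm)
    calc (#(compositionsAvoiding m N) : ℝ) ≤ 2 ^ N := by
          exact_mod_cast (card_compositionsAvoiding_le_two_pow m N).trans
            (Nat.pow_le_pow_right two_pos (N.sub_le 1))
      _ ≤ 2 * ρ ^ N := by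
          rw [mul_pow]
          nlinarith [pow_pos (two_pos (α := ℝ)) N]
  · obtain ⟨K, rfl⟩ : ∃ K, N = K + 1 := ⟨N - 1, by omega⟩
    calc (#(compositionsAvoiding m (K + 1)) : ℝ)
        ≤ ∑ j ∈ (Icc 1 (K + 1)).erase m, (#(compositionsAvoiding m (K + 1 - j)) : ℝ) := by
          exact_mod_cast card_compositionsAvoiding_succ_le m K
      _ ≤ ∑ j ∈ (Icc 1 (K + 1)).erase m, 2 * ρ ^ (K + 1) * ρ⁻¹ ^ j := by
          refine sum_le_sum fun j hj => ?_
          have hj' := mem_Icc.1 (mem_of_mem_erase hj)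
          rw [mul_assoc, inv_pow, ← pow_sub₀ ρ hρ.ne' hj'.2]
          exact ih _ (by omega)
      _ = 2 * ρ ^ (K + 1) * ∑ j ∈ (Icc 1 (K + 1)).erase m, ρ⁻¹ ^ j := (mul_sum ..).symm
      _ ≤ 2 * ρ ^ (K + 1) := mul_le_of_le_one_right (by positivity)
          (sum_inv_two_mul_avoidRate_pow_le_one (mem_Icc.2 ⟨hm, hmN.le⟩))

theorem card_compositionsAvoiding_div_le {m n : ℕ} (hm : 1 ≤ m) (hmn : m ≤ n) :
    (#(compositionsAvoiding m (n - m)) : ℝ) / 2 ^ (n - 1) ≤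
      4 * ((1 / 2) ^ m * avoidRate m ^ (n - m)) := by
  have hsplit : (2 : ℝ) ^ (n - m) * 2 ^ m = 2 * 2 ^ (n - 1) := by
    rw [← pow_add, ← pow_succ']; congr 1; omega
  have hcancel : (2 : ℝ) ^ m * (1 / 2) ^ m = 1 := by rw [← mul_pow]; norm_num
  rw [div_le_iff₀ (by positivity)]
  calc (#(compositionsAvoiding m (n - m)) : ℝ) ≤ 2 * (2 * avoidRate m) ^ (n - m) :=
        card_compositionsAvoiding_le hm _
    _ = 4 * ((1 / 2) ^ m * avoidRate m ^ (n - m)) * 2 ^ (n - 1) := by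
        rw [mul_pow]
        linear_combination (2 * avoidRate m ^ (n - m) * (1 / 2) ^ m) * hsplit
          - 2 * 2 ^ (n - m) * avoidRate m ^ (n - m) * hcancel

theorem probLastPartNew_nonneg (n : ℕ) : 0 ≤ probLastPartNew n := by
  unfold probLastPartNew; positivity

theorem probLastPartNew_le_sum {n : ℕ} (hn : 1 ≤ n) :
    probLastPartNew n ≤ 4 * ∑ m ∈ Icc 1 n, (1 / 2 : ℝ) ^ m * avoidRate m ^ (n - m) := by
  calc probLastPartNew n
      ≤ (∑ m ∈ Icc 1 n, (#(compositionsAvoiding m (n - m)) : ℝ)) / 2 ^ (n - 1) := by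
        unfold probLastPartNew
        gcongr
        exact_mod_cast card_lastPartNew_le hn
    _ = ∑ m ∈ Icc 1 n, (#(compositionsAvoiding m (n - m)) : ℝ) / 2 ^ (n - 1) := sum_div ..
    _ ≤ ∑ m ∈ Icc 1 n, 4 * ((1 / 2 : ℝ) ^ m * avoidRate m ^ (n - m)) :=
        sum_le_sum fun m hm => card_compositionsAvoiding_div_le (mem_Icc.1 hm).1 (mem_Icc.1 hm).2
    _ = _ := (mul_sum ..).symm

theorem sum_half_pow_mul_avoidRate_pow_le {n M : ℕ} (hMn : M < n) :
    ∑ m ∈ Icc 1 n, (1 / 2 : ℝ) ^ m * avoidRate m ^ (n - m) ≤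
      2 ^ (M + 2) / (n - M : ℕ) + (1 / 2) ^ M := by
  have hsmall (m : ℕ) (hm : m ∈ Ioc 0 M) : avoidRate m ^ (n - m) ≤ 2 ^ (M + 2) / (n - M : ℕ) :=
    calc avoidRate m ^ (n - m) ≤ avoidRate M ^ (n - m) :=
          pow_le_pow_left₀ (avoidRate_pos m).le (avoidRate_mono (mem_Ioc.1 hm).2) _
      _ ≤ avoidRate M ^ (n - M) :=
          pow_le_pow_of_le_one (avoidRate_pos M).le (avoidRate_le_one M)
            (Nat.sub_le_sub_left (mem_Ioc.1 hm).2 n)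
      _ ≤ 2 ^ (M + 2) / (n - M : ℕ) := avoidRate_pow_le M _ (Nat.sub_pos_of_lt hMn)
  rw [show Icc 1 n = Ioc 0 n from rfl, ← sum_Ioc_consecutive _ M.zero_le hMn.le]
  gcongr ?_ + ?_
  · calc ∑ m ∈ Ioc 0 M, (1 / 2 : ℝ) ^ m * avoidRate m ^ (n - m)
        ≤ ∑ m ∈ Ioc 0 M, (1 / 2 : ℝ) ^ m * (2 ^ (M + 2) / (n - M : ℕ)) :=
          sum_le_sum fun m hm => by gcongr; exact hsmall m hm
      _ = (∑ m ∈ Ioc 0 M, (1 / 2 : ℝ) ^ m) * (2 ^ (M + 2) / (n - M : ℕ)) := (sum_mul ..).symm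
      _ ≤ 2 ^ (M + 2) / (n - M : ℕ) := by
          refine mul_le_of_le_one_left (by positivity) ?_
          have := geom_sum_Ioc_le_of_lt_one (x := (1 / 2 : ℝ)) (by norm_num) (by norm_num) 0 M
          norm_num at this
          exact this
  · calc ∑ m ∈ Ioc M n, (1 / 2 : ℝ) ^ m * avoidRate m ^ (n - m)
        ≤ ∑ m ∈ Ioc M n, (1 / 2 : ℝ) ^ m := sum_le_sum fun m _ =>
          mul_le_of_le_one_right (by positivity)
            (pow_le_one₀ (avoidRate_pos m).le (avoidRate_le_one m))
      _ ≤ (1 / 2) ^ (M + 1) / (1 - 1 / 2) :=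
          geom_sum_Ioc_le_of_lt_one (by norm_num) (by norm_num) M n
      _ = (1 / 2) ^ M := by rw [pow_succ]; ring

theorem probLastPartNew_le {n : ℕ} (hn : 1 ≤ n) : probLastPartNew n ≤ 40 / √n := by
  set M := Nat.log 4 n
  have h4M : 4 ^ M ≤ n := Nat.pow_log_le_self 4 (by omega)
  have hn4M : n < 4 ^ (M + 1) := Nat.lt_pow_succ_log_self (by norm_num) n
  have h2M : 2 * M ≤ n := by
    have h4 : 4 ^ M = 2 ^ M * 2 ^ M := by rw [← mul_pow]; norm_num
    nlinarith [@Nat.lt_two_pow_self M]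
  have hs : 0 < √n := Real.sqrt_pos.2 (by exact_mod_cast hn)
  have hss : √n * √n = n := Real.mul_self_sqrt (Nat.cast_nonneg n)
  have hlo : (2 : ℝ) ^ M ≤ √n := by
    rw [Real.le_sqrt (by positivity) (Nat.cast_nonneg n), ← pow_mul, pow_mul']
    exact_mod_cast h4M
  have hhi : √n ≤ 2 ^ (M + 1) := by
    rw [Real.sqrt_le_left (by positivity), ← pow_mul, pow_mul']
    exact_mod_cast hn4M.le
  have hfirst : (2 : ℝ) ^ (M + 2) / (n - M : ℕ) ≤ 8 / √n := by
    have h2M' : (2 * M : ℝ) ≤ n := by exact_mod_cast h2M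
    have hn' : (1 : ℝ) ≤ n := by exact_mod_cast hn
    rw [Nat.cast_sub (by omega), div_le_div_iff₀ (by linarith [hs]) hs, pow_add]
    nlinarith
  have hsecond : (1 / 2 : ℝ) ^ M ≤ 2 / √n := by
    rw [one_div_pow, div_le_div_iff₀ (by positivity) hs]
    linarith [pow_succ (2 : ℝ) M]
  calc probLastPartNew n ≤ 4 * ∑ m ∈ Icc 1 n, (1 / 2 : ℝ) ^ m * avoidRate m ^ (n - m) :=
        probLastPartNew_le_sum hn
    _ ≤ 4 * (8 / √n + 2 / √n) := by
        gcongr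
        exact (sum_half_pow_mul_avoidRate_pow_le (by omega)).trans (add_le_add hfirst hsecond)
    _ = 40 / √n := by ring

theorem probLastPartNew_tendsto_zero :
    Tendsto probLastPartNew atTop (nhds 0) ∧
    ∃ C > (0 : ℝ), ∀ n : ℕ, 2 ≤ n →
      probLastPartNew n ≤ C * Real.sqrt (n * Real.log n) / n := by
  refine ⟨?_, 40 / √(Real.log 2), by positivity, fun n hn => ?_⟩
  · refine squeeze_zero' (Eventually.of_forall probLastPartNew_nonneg)
      ((eventually_ge_atTop 1).mono fun n hn => probLastPartNew_le hn) ?_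
    exact tendsto_const_nhds.div_atTop (Real.tendsto_sqrt_atTop.comp tendsto_natCast_atTop_atTop)
  · have hn₀ : (0 : ℝ) < n := by positivity
    have hlog : √(Real.log 2) ≤ √(Real.log n) :=
      Real.sqrt_le_sqrt (Real.log_le_log two_pos (by exact_mod_cast hn))
    calc probLastPartNew n ≤ 40 / √n := probLastPartNew_le (by omega)
      _ = 40 / √(Real.log 2) * √(Real.log 2) * (√n / n) := by
          rw [Real.sqrt_div_self', div_mul_cancel₀ _ (by positivity)]; ring
      _ ≤ 40 / √(Real.log 2) * √(Real.log n) * (√n / n) := by gcongr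
      _ = 40 / √(Real.log 2) * √(n * Real.log n) / n := by rw [Real.sqrt_mul hn₀.le]; ring
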